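/- Let B be a finite skew left brace and let d = |B / Ann(B)| = [B : Ann(B)]. Then (2d - 1)/d² ≤ Pb(B) ≤ (d + 1)/(2d). -/
import Mathlib


/-- A skew left brace structure on a type carrying both an additive and a
multiplicative group structure: the compatibility (skew left distributivity)
`a ∘ (b + c) = (a ∘ b) - a + (a ∘ c)` holds, and the two identities coincide. -/
class SkewBrace (B : Type*) [AddGroup B] [Group B] : Prop where
  compat : ∀ a b c : B, a * (b + c) = a * b + -a + a * c
  zero_eq_one : (0 : B) = 1

section Defs

variable {B : Type*} [AddGroup B] [Group B]

/-- `λ_a(b) = -a + (a ∘ b)`. -/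
def lambdaMap (a b : B) : B := -a + a * b

/-- `a * b := -a + (a ∘ b) - b` (the star product of a skew brace). -/
def starOp (a b : B) : B := -a + a * b + -b

/-- The additive commutator `[a,b]⁺ = a + b - a - b`. -/
def addComB (a b : B) : B := a + b + -a + -b

/-- The multiplicative commutator `[a,b]∘ = a ∘ b ∘ a⁻¹ ∘ b⁻¹`. -/
def mulComB (a b : B) : B := a * b * a⁻¹ * b⁻¹

/-- The brace centralizer `Cb_B(x) = {b | x*b = b*x = [x,b]⁺ = 1}`. -/
def Cb (x : B) : Set B := {b | starOp x b = 0 ∧ starOp b x = 0 ∧ addComB x b = 0}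

/-- The annihilator `Ann(B) = Ker λ ∩ Z(B,+) ∩ Z(B,∘)` as a set. -/
def AnnSet (B : Type*) [AddGroup B] [Group B] : Set B :=
  {a | (∀ b : B, a + b = a * b) ∧ (∀ b : B, a + b = b + a) ∧ (∀ b : B, a * b = b * a)}

/-- A sub-skew brace: a subset closed under both group operations and inverses. -/
def IsSubSkewBrace (H : Set B) : Prop :=
  (0 : B) ∈ H ∧ (∀ a ∈ H, ∀ b ∈ H, a + b ∈ H) ∧ (∀ a ∈ H, -a ∈ H) ∧
    (∀ a ∈ H, ∀ b ∈ H, a * b ∈ H) ∧ (∀ a ∈ H, a⁻¹ ∈ H)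

/-- The commuting probability of a (finite) skew brace. -/
noncomputable def Pb (B : Type*) [AddGroup B] [Group B] : ℚ :=
  (Nat.card {p : B × B //
      starOp p.1 p.2 = 0 ∧ starOp p.2 p.1 = 0 ∧ addComB p.1 p.2 = 0} : ℚ)
    / (Nat.card B : ℚ) ^ 2

/-- The commuting probability of a sub-skew brace `H` of `B`. -/
noncomputable def PbSub (H : Set B) : ℚ :=
  (Nat.card {p : B × B // p.1 ∈ H ∧ p.2 ∈ H ∧
      starOp p.1 p.2 = 0 ∧ starOp p.2 p.1 = 0 ∧ addComB p.1 p.2 = 0} : ℚ)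
    / (Nat.card H : ℚ) ^ 2

end Defs

set_option linter.unusedSectionVars false


section Lemmas
variable {B : Type*} [AddGroup B] [Group B] [SkewBrace B]

lemma mul_eq_add_lam (a b : B) : a * b = a + lambdaMap a b := by
  simp [lambdaMap, ← add_assoc]

lemma lam_add (a b c : B) : lambdaMap a (b + c) = lambdaMap a b + lambdaMap a c := by
  simp [lambdaMap, SkewBrace.compat a b c, add_assoc]

lemma lam_zero (a : B) : lambdaMap a 0 = 0 := by
  simp [lambdaMap, SkewBrace.zero_eq_one]

lemma lam_neg (a b : B) : lambdaMap a (-b) = -(lambdaMap a b) := by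
  have := lam_add a b (-b)
  rw [add_neg_cancel, lam_zero] at this
  exact (neg_eq_of_add_eq_zero_right this.symm).symm

lemma lam_mul (a b c : B) : lambdaMap (a * b) c = lambdaMap a (lambdaMap b c) := by
  have h1 : a * (-b + b * c) = a * (-b) + -a + a * (b * c) := SkewBrace.compat a (-b) (b * c)
  have h2 : a * (-b) = a + -(lambdaMap a b) := by
    rw [mul_eq_add_lam a (-b), lam_neg]
  simp only [lambdaMap] at *
  rw [h1, h2, mul_assoc]
  simp [add_assoc]

lemma lam_one (b : B) : lambdaMap (1 : B) b = b := by
  have h0 : (-1 : B) = 0 := by rw [← SkewBrace.zero_eq_one]; exact neg_zero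
  rw [lambdaMap, one_mul, h0, zero_add]

-- membership characterization
lemma mem_Cb {x b : B} : b ∈ Cb x ↔ lambdaMap x b = b ∧ lambdaMap b x = x ∧ x + b = b + x := by
  simp only [Cb, Set.mem_setOf_eq, starOp, addComB, lambdaMap]
  constructor
  · rintro ⟨h1, h2, h3⟩
    refine ⟨?_, ?_, ?_⟩
    · have : -x + x * b = b := by
        have := congrArg (· + b) h1; simpa [add_assoc] using this
      exact this
    · have : -b + b * x = x := by
        have := congrArg (· + x) h2; simpa [add_assoc] using this
      exact this
    · have h4 := congrArg (· + b) h3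
      simp only [add_assoc] at h4
      simp only [neg_add_cancel, add_zero, zero_add] at h4
      have h5 := congrArg (· + x) h4
      simpa [add_assoc] using h5
  · rintro ⟨h1, h2, h3⟩
    refine ⟨?_, ?_, ?_⟩
    · rw [h1]; simp
    · rw [h2]; simp
    · rw [h3]; simp [add_assoc]

end Lemmas

section Sub
variable {B : Type*} [AddGroup B] [Group B] [SkewBrace B]

lemma mul_comm_of_mem_Cb {x b : B} (hb : b ∈ Cb x) : x * b = b * x := by
  obtain ⟨h1, h2, h3⟩ := mem_Cb.mp hb
  rw [mul_eq_add_lam, mul_eq_add_lam, h1, h2, h3]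

lemma one_mem_Cb (x : B) : (1 : B) ∈ Cb x := by
  rw [mem_Cb, lam_one, ← SkewBrace.zero_eq_one]
  exact ⟨lam_zero x, rfl, by simp⟩

lemma mul_mem_Cb {x b c : B} (hb : b ∈ Cb x) (hc : c ∈ Cb x) : b * c ∈ Cb x := by
  obtain ⟨hb1, hb2, hb3⟩ := mem_Cb.mp hb
  obtain ⟨hc1, hc2, hc3⟩ := mem_Cb.mp hc
  have hcomm : x * b = b * x := mul_comm_of_mem_Cb hb
  rw [mem_Cb]
  refine ⟨?_, ?_, ?_⟩
  · rw [mul_eq_add_lam b c, lam_add, hb1, ← lam_mul, hcomm, lam_mul, hc1]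
  · rw [lam_mul, hc2, hb2]
  · have key : x + lambdaMap b c = lambdaMap b c + x := by
      have e1 : lambdaMap b (x + c) = x + lambdaMap b c := by rw [lam_add, hb2]
      have e2 : lambdaMap b (c + x) = lambdaMap b c + x := by rw [lam_add, hb2]
      rw [← e1, ← e2, hc3]
    rw [mul_eq_add_lam b c, ← add_assoc, hb3, add_assoc, key, ← add_assoc]

lemma inv_eq_lam (b : B) : b⁻¹ = lambdaMap b⁻¹ (-b) := by
  have h : b⁻¹ * b = b⁻¹ + lambdaMap b⁻¹ b := mul_eq_add_lam _ _
  rw [inv_mul_cancel, ← SkewBrace.zero_eq_one] at h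
  rw [lam_neg]
  exact (neg_eq_of_add_eq_zero_left h.symm).symm

lemma inv_mem_Cb {x b : B} (hb : b ∈ Cb x) : b⁻¹ ∈ Cb x := by
  obtain ⟨hb1, hb2, hb3⟩ := mem_Cb.mp hb
  have hcomm : Commute x b := mul_comm_of_mem_Cb hb
  have hinv : x * b⁻¹ = b⁻¹ * x := hcomm.inv_right
  have hlaminv : lambdaMap b⁻¹ x = x := by
    have := lam_mul b⁻¹ b x
    rw [inv_mul_cancel, lam_one, hb2] at this
    exact this.symm
  rw [mem_Cb]
  refine ⟨?_, hlaminv, ?_⟩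
  · rw [inv_eq_lam b, ← lam_mul, hinv, lam_mul, lam_neg, hb1]
  · rw [inv_eq_lam b]
    have e1 : lambdaMap b⁻¹ (x + -b) = x + lambdaMap b⁻¹ (-b) := by
      rw [lam_add, hlaminv]
    have e2 : lambdaMap b⁻¹ (-b + x) = lambdaMap b⁻¹ (-b) + x := by
      rw [lam_add, hlaminv]
    rw [← e1, ← e2]
    congr 1
    have : AddCommute x b := hb3
    exact this.neg_right

/-- `Cb x` as a subgroup of `(B, ∘)`. -/
def CbSubgroup (x : B) : Subgroup B where
  carrier := Cb x
  one_mem' := one_mem_Cb x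
  mul_mem' := mul_mem_Cb
  inv_mem' := inv_mem_Cb

lemma ann_subset_Cb (x : B) : AnnSet B ⊆ Cb x := by
  rintro a ⟨h1, h2, h3⟩
  rw [mem_Cb]
  refine ⟨?_, ?_, (h2 x).symm⟩
  · rw [lambdaMap, ← h3 x, ← h1 x, h2 x, ← add_assoc]; simp
  · rw [lambdaMap, ← h1 x, ← add_assoc]; simp

lemma zero_mem_ann : (0 : B) ∈ AnnSet B := by
  refine ⟨fun b => ?_, fun b => ?_, fun b => ?_⟩
  · rw [SkewBrace.zero_eq_one, one_mul]; rw [← SkewBrace.zero_eq_one, zero_add]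
  · simp
  · rw [SkewBrace.zero_eq_one, one_mul, mul_one]

lemma mem_ann_of_Cb_univ {x : B} (h : ∀ b, b ∈ Cb x) : x ∈ AnnSet B := by
  refine ⟨fun b => ?_, fun b => ?_, fun b => ?_⟩
  · obtain ⟨h1, _, _⟩ := mem_Cb.mp (h b)
    rw [mul_eq_add_lam, h1]
  · exact (mem_Cb.mp (h b)).2.2
  · exact mul_comm_of_mem_Cb (h b)

lemma Cb_eq_univ_of_mem_ann {x : B} (hx : x ∈ AnnSet B) : ∀ b : B, b ∈ Cb x := by
  intro b
  rw [mem_Cb]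
  obtain ⟨h1, h2, h3⟩ := hx
  refine ⟨?_, ?_, (h2 b)⟩
  · rw [lambdaMap, ← h1 b, ← add_assoc]; simp
  · rw [lambdaMap, ← h3 b, ← h1 b, h2 b, ← add_assoc]; simp

end Sub


/-- If `d = [B : Ann(B)]`, then `(2d-1)/d² ≤ Pb(B) ≤ (d+1)/(2d)`. -/
theorem stmt7 {B : Type*} [AddGroup B] [Group B] [SkewBrace B] [Finite B]
    (d : ℕ) (hd : Nat.card B = d * Nat.card (AnnSet B)) :
    (2 * (d : ℚ) - 1) / (d : ℚ) ^ 2 ≤ Pb B ∧ Pb B ≤ ((d : ℚ) + 1) / (2 * d) := by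
  classical
  letI : Fintype B := Fintype.ofFinite B
  set n := Nat.card B with hn
  set a := Nat.card (AnnSet B) with ha
  set N := Nat.card {p : B × B //
      starOp p.1 p.2 = 0 ∧ starOp p.2 p.1 = 0 ∧ addComB p.1 p.2 = 0} with hNdef
  have hn0 : 0 < n := Nat.card_pos
  have ha0 : 0 < a := @Nat.card_pos _ ⟨⟨0, zero_mem_ann⟩⟩ _
  have hd0 : 0 < d := by
    rcases Nat.eq_zero_or_pos d with h | h
    · rw [h, zero_mul] at hd; omega
    · exact h
  have han : a ≤ n := by
    rw [hd]; exact Nat.le_mul_of_pos_left a hd0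
  -- N as a sum of centralizer cardinalities
  have hN : N = ∑ x : B, Nat.card (Cb x) := by
    have e : N = Nat.card (Σ x : B,
        {b : B // starOp x b = 0 ∧ starOp b x = 0 ∧ addComB x b = 0}) :=
      Nat.card_congr (Equiv.subtypeProdEquivSigmaSubtype
        (fun x b : B => starOp x b = 0 ∧ starOp b x = 0 ∧ addComB x b = 0))
    rw [e, Nat.card_eq_fintype_card, Fintype.card_sigma]
    refine Finset.sum_congr rfl fun x _ => ?_
    rw [← Nat.card_eq_fintype_card]
    rfl
  have h_ann_card : ∀ x ∈ AnnSet B, Nat.card (Cb x) = n :=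
    fun x hx => Nat.card_congr (Equiv.subtypeUnivEquiv (Cb_eq_univ_of_mem_ann hx))
  have h_low : ∀ x : B, a ≤ Nat.card (Cb x) := fun x =>
    Nat.card_le_card_of_injective (Set.inclusion (ann_subset_Cb x))
      (Set.inclusion_injective _)
  have h_high : ∀ x : B, x ∉ AnnSet B → 2 * Nat.card (Cb x) ≤ n := by
    intro x hx
    have hdvd : Nat.card (Cb x) ∣ n := Subgroup.card_subgroup_dvd_card (CbSubgroup x)
    have hne : Nat.card (Cb x) ≠ n := by
      intro h
      apply hx
      apply mem_ann_of_Cb_univ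
      intro b
      have huniv : Cb x = Set.univ := by
        apply Set.eq_of_subset_of_ncard_le (Set.subset_univ _)
        rw [← Nat.card_coe_set_eq, ← Nat.card_coe_set_eq, h]
        have : Nat.card (Set.univ : Set B) = n := Nat.card_congr (Equiv.Set.univ B)
        omega
      rw [huniv]; trivial
    obtain ⟨k, hk⟩ := hdvd
    have hk0 : k ≠ 0 := by rintro rfl; rw [mul_zero] at hk; omega
    have hk1 : k ≠ 1 := by rintro rfl; rw [mul_one] at hk; exact hne hk.symm
    have : 2 ≤ k := by omega
    calc 2 * Nat.card (Cb x) = Nat.card (Cb x) * 2 := by ring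
      _ ≤ Nat.card (Cb x) * k := Nat.mul_le_mul_left _ this
      _ = n := hk.symm
  -- split the sum over AnnSet
  set S : Finset B := (AnnSet B).toFinset with hSdef
  have hScard : S.card = a := by
    rw [hSdef, Set.toFinset_card, ← Nat.card_eq_fintype_card]
  have hSccard : Sᶜ.card = n - a := by
    rw [Finset.card_compl, hScard, ← Nat.card_eq_fintype_card]
  have hsplit : N = ∑ x ∈ S, Nat.card (Cb x) + ∑ x ∈ Sᶜ, Nat.card (Cb x) := by
    rw [hN, Finset.sum_add_sum_compl]
  have hmemS : ∀ x : B, x ∈ S ↔ x ∈ AnnSet B := fun x => Set.mem_toFinset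
  -- lower bound in ℕ
  have hlowN : a * n + (n - a) * a ≤ N := by
    rw [hsplit]
    have h1 : a * n ≤ ∑ x ∈ S, Nat.card (Cb x) := by
      calc a * n = ∑ _x ∈ S, n := by rw [Finset.sum_const, hScard, smul_eq_mul]
        _ ≤ _ := Finset.sum_le_sum fun x hx => le_of_eq (h_ann_card x ((hmemS x).mp hx)).symm
    have h2 : (n - a) * a ≤ ∑ x ∈ Sᶜ, Nat.card (Cb x) := by
      calc (n - a) * a = ∑ _x ∈ Sᶜ, a := by rw [Finset.sum_const, hSccard, smul_eq_mul]
        _ ≤ _ := Finset.sum_le_sum fun x _ => h_low x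
    omega
  -- upper bound in ℕ
  have hupN : 2 * N ≤ 2 * (a * n) + (n - a) * n := by
    rw [hsplit, Nat.mul_add]
    have h1 : 2 * ∑ x ∈ S, Nat.card (Cb x) = 2 * (a * n) := by
      congr 1
      calc ∑ x ∈ S, Nat.card (Cb x) = ∑ _x ∈ S, n :=
            Finset.sum_congr rfl fun x hx => h_ann_card x ((hmemS x).mp hx)
        _ = a * n := by rw [Finset.sum_const, hScard, smul_eq_mul]
    have h2 : 2 * ∑ x ∈ Sᶜ, Nat.card (Cb x) ≤ (n - a) * n := by
      calc 2 * ∑ x ∈ Sᶜ, Nat.card (Cb x) = ∑ x ∈ Sᶜ, 2 * Nat.card (Cb x) := by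
            rw [Finset.mul_sum]
        _ ≤ ∑ _x ∈ Sᶜ, n := Finset.sum_le_sum fun x hx => h_high x
            (fun hmem => by simp [hSdef, Set.mem_toFinset] at hx; exact hx hmem)
        _ = (n - a) * n := by rw [Finset.sum_const, hSccard, smul_eq_mul]
    omega
  -- pass to ℚ
  have hqn : (n : ℚ) = d * a := by exact_mod_cast hd
  have hqa0 : (0:ℚ) < a := by exact_mod_cast ha0
  have hqn0 : (0:ℚ) < n := by exact_mod_cast hn0
  have hqd0 : (0:ℚ) < d := by exact_mod_cast hd0
  have hlowQ : (a:ℚ) * n + ((n:ℚ) - a) * a ≤ N := by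
    have := (Nat.cast_le (α := ℚ)).mpr hlowN
    push_cast [Nat.cast_sub han] at this
    convert this using 2
  have hupQ : 2 * (N:ℚ) ≤ 2 * ((a:ℚ) * n) + ((n:ℚ) - a) * n := by
    have := (Nat.cast_le (α := ℚ)).mpr hupN
    push_cast [Nat.cast_sub han] at this
    convert this using 2
  have hPb : Pb B = (N : ℚ) / (n : ℚ) ^ 2 := rfl
  rw [hPb]
  constructor
  · rw [div_le_div_iff₀ (by positivity) (by positivity)]
    have h2 := mul_le_mul_of_nonneg_right hlowQ (sq_nonneg (d:ℚ))
    calc (2 * (d:ℚ) - 1) * (n:ℚ) ^ 2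
        = ((a:ℚ) * ((d:ℚ)*(a:ℚ)) + (((d:ℚ)*(a:ℚ)) - a) * a) * (d:ℚ)^2 := by
          rw [hqn]; ring
      _ = ((a:ℚ) * n + ((n:ℚ) - a) * a) * (d:ℚ)^2 := by rw [hqn]
      _ ≤ (N:ℚ) * (d:ℚ)^2 := h2
  · rw [div_le_div_iff₀ (by positivity) (by positivity)]
    have h2 := mul_le_mul_of_nonneg_right hupQ (le_of_lt hqd0)
    calc (N:ℚ) * (2 * d) = (2 * (N:ℚ)) * d := by ring
      _ ≤ (2 * ((a:ℚ) * n) + ((n:ℚ) - a) * n) * d := h2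
      _ = (2 * ((a:ℚ) * ((d:ℚ)*a)) + (((d:ℚ)*a) - a) * ((d:ℚ)*a)) * d := by rw [hqn]
      _ = ((d:ℚ) + 1) * ((d:ℚ)*a) ^ 2 := by ring
      _ = ((d:ℚ) + 1) * (n:ℚ) ^ 2 := by rw [hqn]
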